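/- arXiv:1812.05311 — 8 statements merged into one kernel-verified Lean document; each statement's English description precedes it below -/
import Mathlib

section
/- Let F be a finite field with q elements. Then there exists a ∈ F such that the polynomial λ² + aλ + 1 is irreducible over F and a root ω of this polynomial in the algebraic closure of F has multiplicative order q + 1 in the multiplicative group of the algebraic closure. -/
/-!
Since `q = 0` in `F`, `q + 1` is nonzero in `F`, so the algebraic closure contains a
primitive `(q + 1)`-th root of unity `ω`. Then `ω ^ q = ω⁻¹`, so `t = ω + ω⁻¹` is fixed by the
Frobenius `x ↦ x ^ q` and therefore lies in `F`, and `ω` is a root of `λ² - tλ + 1`. This quadratic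
factors as `(λ - ω)(λ - ω⁻¹)` over the closure, and neither factor is defined over `F`: `ω` and
`ω⁻¹` have order `q + 1`, while every nonzero element of `F` has order dividing `q - 1`.
-/

open Polynomial

noncomputable section

abbrev SL2 (F : Type*) [Field F] := Matrix.SpecialLinearGroup (Fin 2) F

abbrev PSL2 (F : Type*) [Field F] := SL2 F ⧸ Subgroup.center (SL2 F)

/-- image in `PSL₂(F)` of the matrix `[[1, x], [0, 1]]`. -/
def uu {F : Type*} [Field F] (x : F) : PSL2 F :=
  QuotientGroup.mk ⟨!![1, x; 0, 1], by simp [Matrix.det_fin_two_of]⟩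

/-- image in `PSL₂(F)` of the matrix `[[y, 0], [0, y⁻¹]]`. -/
def hh {F : Type*} [Field F] (y : F) (hy : y ≠ 0) : PSL2 F :=
  QuotientGroup.mk ⟨!![y, 0; 0, y⁻¹], by simp [Matrix.det_fin_two_of, mul_inv_cancel₀ hy]⟩

/-- image in `PSL₂(F)` of the matrix `[[0, 1], [-1, 0]]`. -/
def ss {F : Type*} [Field F] : PSL2 F :=
  QuotientGroup.mk ⟨!![0, 1; -1, 0], by simp [Matrix.det_fin_two_of]⟩

/-- the sequence `a_k`: `a₁ = a`, `a_{k+1} = a - a_k⁻¹` (with junk value `a₀ = 0`). -/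
def aSeq {F : Type*} [Field F] (a : F) : ℕ → F
  | 0 => 0
  | k + 1 => a - (aSeq a k)⁻¹

/-- the sequence `b_ℓ`: `b₀ = b`, `b_{ℓ+1} = a - b_ℓ⁻¹`. -/
def bSeq {F : Type*} [Field F] (a b : F) : ℕ → F
  | 0 => b
  | k + 1 => a - (bSeq a b k)⁻¹

/-- `alph a n = α_{n-1}(a)`, the (index-shifted) Dickson polynomial of the second
kind values: `α_{-1} = 0`, `α₀ = 1`, `α_{n+1} = a·α_n - α_{n-1}`. -/
def alph {F : Type*} [Field F] (a : F) : ℕ → F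
  | 0 => 0
  | 1 => 1
  | n + 2 => a * alph a (n + 1) - alph a n

/-- `bet a b n = β_{n-1}(a,b)`: `β_{-1} = 1`, `β_n = b·α_n - α_{n-1}` for `n ≥ 0`. -/
def bet {F : Type*} [Field F] (a b : F) : ℕ → F
  | 0 => 1
  | n + 1 => b * alph a (n + 1) - alph a n

/-- `gam a b n = γ_{n-1}(a,b)` where `γ_n = α_n + b·β_n`. -/
def gam {F : Type*} [Field F] (a b : F) (n : ℕ) : F := alph a n + b * bet a b n

theorem aeval_X_sq_add_C_mul_X_add_one_eq_mul {F K : Type*} [CommRing F] [Field K] [Algebra F K]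
    {a : F} {ω : K} (hω : ω ≠ 0) (ha : algebraMap F K a = -(ω + ω⁻¹)) (x : K) :
    aeval x (X ^ 2 + C a * X + 1 : F[X]) = (x - ω) * (x - ω⁻¹) := by
  have := mul_inv_cancel₀ hω
  simp only [map_add, map_mul, map_pow, map_one, aeval_X, aeval_C, ha]
  linear_combination -this

namespace FiniteField

variable {F K : Type*} [Field F] [Fintype F]

theorem mem_range_algebraMap_of_pow_card_eq [CommRing K] [IsDomain K] [Algebra F K] {x : K}
    (hx : x ^ Fintype.card F = x) : x ∈ Set.range (algebraMap F K) := by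
  have hroots := roots_map_of_injective_of_card_eq_natDegree (algebraMap F K).injective
    (p := X ^ Fintype.card F - X) <| by
      rw [roots_X_pow_card_sub_X, X_pow_card_sub_X_natDegree_eq F Fintype.one_lt_card]
      rfl
  have hne : (X ^ Fintype.card F - X : F[X]).map (algebraMap F K) ≠ 0 :=
    (Polynomial.map_ne_zero_iff (algebraMap F K).injective).mpr
      (X_pow_card_sub_X_ne_zero F Fintype.one_lt_card)
  have : x ∈ ((X ^ Fintype.card F - X : F[X]).map (algebraMap F K)).roots := by
    rw [mem_roots hne]
    simp [hx]
  rw [← hroots, roots_X_pow_card_sub_X] at this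
  obtain ⟨c, -, hc⟩ := Multiset.mem_map.mp this
  exact ⟨c, hc⟩

variable [Field K] [Algebra F K]

theorem add_inv_mem_range_algebraMap_of_pow_card_add_one_eq_one {ω : K}
    (hω : ω ^ (Fintype.card F + 1) = 1) : ω + ω⁻¹ ∈ Set.range (algebraMap F K) := by
  have hωq : ω ^ Fintype.card F = ω⁻¹ := eq_inv_of_mul_eq_one_left (pow_succ ω _ ▸ hω)
  apply mem_range_algebraMap_of_pow_card_eq
  calc (ω + ω⁻¹) ^ Fintype.card F = frobeniusAlgHom F K (ω + ω⁻¹) := rfl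
    _ = ω ^ Fintype.card F + (ω ^ Fintype.card F)⁻¹ := by rw [map_add, map_inv₀]; rfl
    _ = ω + ω⁻¹ := by rw [hωq, inv_inv, add_comm]

theorem notMem_range_algebraMap_of_card_sub_one_lt_orderOf {x : K}
    (h : Fintype.card F - 1 < orderOf x) : x ∉ Set.range (algebraMap F K) := by
  rintro ⟨r, rfl⟩
  have hord : orderOf (algebraMap F K r) = orderOf r :=
    orderOf_injective (algebraMap F K).toMonoidHom (algebraMap F K).injective r
  rw [hord] at h
  have hr : r ≠ 0 := by
    rintro rfl
    simp at h
  have := Nat.le_of_dvd (Nat.sub_pos_of_lt Fintype.one_lt_card)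
    (orderOf_dvd_of_pow_eq_one (pow_card_sub_one_eq_one r hr))
  omega

theorem irreducible_X_sq_add_C_mul_X_add_one {a : F} {ω : K} {n : ℕ} (hω : IsPrimitiveRoot ω n)
    (hn : Fintype.card F - 1 < n) (ha : algebraMap F K a = -(ω + ω⁻¹)) :
    Irreducible (X ^ 2 + C a * X + 1 : F[X]) := by
  have hω0 : ω ≠ 0 := hω.ne_zero (by omega)
  have hdeg : (X ^ 2 + C a * X + 1 : F[X]).natDegree = 2 := by compute_degree!
  refine irreducible_of_degree_le_three_of_not_isRoot (by simp [hdeg]) fun r hr ↦ ?_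
  have hfactor := aeval_X_sq_add_C_mul_X_add_one_eq_mul hω0 ha (algebraMap F K r)
  rw [aeval_algebraMap_apply, coe_aeval_eq_eval, hr.eq_zero, map_zero, eq_comm,
    mul_eq_zero, sub_eq_zero, sub_eq_zero] at hfactor
  rcases hfactor with hr | hr
  · exact notMem_range_algebraMap_of_card_sub_one_lt_orderOf (hω.eq_orderOf ▸ hn) ⟨r, hr⟩
  · exact notMem_range_algebraMap_of_card_sub_one_lt_orderOf (hω.inv.eq_orderOf ▸ hn) ⟨r, hr⟩

end FiniteField

theorem stmt0 (F : Type*) [Field F] [Fintype F] (q : ℕ) (hq : Fintype.card F = q) :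
    ∃ a : F, Irreducible (X ^ 2 + C a * X + 1 : F[X]) ∧
      ∃ ω : AlgebraicClosure F, aeval ω (X ^ 2 + C a * X + 1 : F[X]) = 0 ∧ orderOf ω = q + 1 := by
  subst hq
  have : NeZero ((Fintype.card F + 1 : ℕ) : F) := ⟨by simp⟩
  obtain ⟨ω, hω⟩ :=
    HasEnoughRootsOfUnity.exists_primitiveRoot (AlgebraicClosure F) (Fintype.card F + 1)
  obtain ⟨c, hc⟩ :=
    FiniteField.add_inv_mem_range_algebraMap_of_pow_card_add_one_eq_one (F := F) hω.pow_eq_one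
  have ha : algebraMap F (AlgebraicClosure F) (-c) = -(ω + ω⁻¹) := by rw [map_neg, hc]
  refine ⟨-c, FiniteField.irreducible_X_sq_add_C_mul_X_add_one hω (by omega) ha, ω, ?_,
    hω.eq_orderOf.symm⟩
  rw [aeval_X_sq_add_C_mul_X_add_one_eq_mul (hω.ne_zero (by omega)) ha, sub_self, zero_mul]

end
end

section
/- The order of the element u(a)·s in PSL₂(F), i.e. the order of the image in PSL₂(F) of the matrix [[−a, 1], [−1, 0]] ∈ SL₂(F), equals (q+1)/gcd(2, q+1); that is, the order is q+1 when F has characteristic 2, and (q+1)/2 when F has odd characteristic. -/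
/-!
Lift `u(a)·s` to `M = [[-a, 1], [-1, 0]] ∈ SL₂(F)`, whose characteristic polynomial is
`λ² + aλ + 1`. Up to sign, the entries of `Mⁿ` are consecutive values of the recursion `alph`,
so `Mⁿ` is central exactly when its off-diagonal entry `alph a n` vanishes. Over a field containing
a root `ω`, the Binet formula `(ω - ω⁻¹) · alph a n = ±(ωⁿ - ω⁻ⁿ)` and `ω ≠ ±1` (irreducibility)
turn this into `ω²ⁿ = 1`. Hence the image of `M` has the order of `ω²`, i.e. `(q + 1) / gcd(2, q + 1)`.
-/

open Polynomial

noncomputable section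

lemma map_alph {F K : Type*} [Field F] [Field K] (φ : F →+* K) (a : F) (n : ℕ) :
    φ (alph a n) = alph (φ a) n := by
  induction n using alph.induct with
  | case1 => simp [alph]
  | case2 => simp [alph]
  | case3 n ih₀ ih₁ => simp [alph, ih₀, ih₁]

section Binet

variable {K : Type*} [Field K] {a ω : K}

-- The Binet formula, multiplied by `ωⁿ⁺¹` to clear the inverses.
lemma sq_sub_one_mul_pow_mul_alph (hω : ω ^ 2 + a * ω + 1 = 0) (n : ℕ) :
    (ω ^ 2 - 1) * ω ^ n * alph a n = (-1) ^ (n + 1) * ω * (ω ^ (2 * n) - 1) := by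
  induction n using alph.induct with
  | case1 => simp [alph]
  | case2 => simp [alph]; ring
  | case3 n ih₁ ih₀ =>
    change (ω ^ 2 - 1) * ω ^ (n + 2) * (a * alph a (n + 1) - alph a n) =
      (-1) ^ (n + 3) * ω * (ω ^ (2 * (n + 2)) - 1)
    linear_combination a * ω * ih₁ - ω ^ 2 * ih₀ + (-1) ^ n * ω * (ω ^ (2 * n + 2) - 1) * hω

lemma alph_eq_zero_iff_pow_eq_one (hω : ω ^ 2 + a * ω + 1 = 0) (hω₁ : ω ^ 2 ≠ 1) (n : ℕ) :
    alph a n = 0 ↔ (ω ^ 2) ^ n = 1 := by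
  have hω₀ : ω ≠ 0 := by rintro rfl; simp at hω
  have h := sq_sub_one_mul_pow_mul_alph hω n
  rw [← pow_mul, ← sub_eq_zero (b := (1 : K))]
  constructor
  · intro h0
    simpa [h0, hω₀] using h
  · intro h1
    rw [h1, mul_zero] at h
    simpa [sub_eq_zero, hω₁, hω₀] using h

end Binet

namespace Matrix.SpecialLinearGroup

variable {F : Type*} [Field F]

lemma mem_center_iff_fin_two {A : SL2 F} :
    A ∈ Subgroup.center (SL2 F) ↔ A 1 0 = 0 ∧ A 0 1 = 0 ∧ A 0 0 = A 1 1 := by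
  rw [mem_center_iff]
  constructor
  · rintro ⟨r, -, hr⟩
    simp [← hr]
  · rintro ⟨h₁₀, h₀₁, h₀₀⟩
    refine ⟨A 0 0, ?_, ?_⟩
    · have hdet := A.det_coe
      rw [det_fin_two, h₁₀, ← h₀₀] at hdet
      simpa [sq] using hdet
    · ext i j
      fin_cases i <;> fin_cases j <;> simp [h₁₀, h₀₁, h₀₀]

end Matrix.SpecialLinearGroup

def companionSL {F : Type*} [Field F] (a : F) : SL2 F :=
  ⟨!![-a, 1; -1, 0], by simp [Matrix.det_fin_two_of]⟩

section Companion

variable {F : Type*} [Field F]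

lemma uu_mul_ss (a : F) : uu a * ss = (companionSL a : PSL2 F) := by
  refine (QuotientGroup.mk_mul _ _ _).symm.trans (congrArg _ (Subtype.ext ?_))
  change !![1, a; 0, 1] * !![0, 1; -1, 0] = !![-a, 1; -1, 0]
  simp

lemma coe_companionSL_pow_succ (a : F) (n : ℕ) :
    ((companionSL a ^ (n + 1) : SL2 F) : Matrix (Fin 2) (Fin 2) F) =
      (-1 : F) ^ (n + 1) • !![alph a (n + 2), -alph a (n + 1); alph a (n + 1), -alph a n] := by
  induction n with
  | zero =>
    rw [zero_add, pow_one]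
    ext i j
    fin_cases i <;> fin_cases j <;> simp [companionSL, alph]
  | succ n ih =>
    rw [pow_succ, Matrix.SpecialLinearGroup.coe_mul, ih]
    ext i j
    fin_cases i <;> fin_cases j <;>
      simp [companionSL, Matrix.mul_apply, Fin.sum_univ_succ, alph, pow_succ] <;> ring

lemma mk_companionSL_pow_eq_one_iff (a : F) (n : ℕ) :
    (companionSL a : PSL2 F) ^ n = 1 ↔ alph a n = 0 := by
  rw [← QuotientGroup.mk_pow, QuotientGroup.eq_one_iff]
  cases n with
  | zero => simp [alph]
  | succ n =>
    rw [Matrix.SpecialLinearGroup.mem_center_iff_fin_two, coe_companionSL_pow_succ]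
    simp +contextual [alph]

end Companion

lemma sq_ne_one_of_irreducible {F K : Type*} [Field F] [Field K] [Algebra F K] {a : F}
    (hirr : Irreducible (X ^ 2 + C a * X + 1 : F[X])) {ω : K}
    (hroot : aeval ω (X ^ 2 + C a * X + 1 : F[X]) = 0) : ω ^ 2 ≠ 1 := by
  intro h
  obtain ⟨c, rfl⟩ : ∃ c : F, algebraMap F K c = ω := by
    rcases sq_eq_one_iff.mp h with rfl | rfl
    exacts [⟨1, map_one _⟩, ⟨-1, by simp⟩]
  rw [aeval_algebraMap_apply, map_eq_zero] at hroot
  have hdeg : (X ^ 2 + C a * X + 1 : F[X]).degree = 2 := by compute_degree!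
  simpa [hdeg] using degree_eq_one_of_irreducible_of_root hirr hroot

theorem stmt1_general (F : Type*) [Field F] (q : ℕ)
    (a : F) (hirr : Irreducible (X ^ 2 + C a * X + 1 : F[X]))
    (ω : AlgebraicClosure F) (hroot : aeval ω (X ^ 2 + C a * X + 1 : F[X]) = 0)
    (hord : orderOf ω = q + 1) :
    orderOf (uu a * ss : PSL2 F) = (q + 1) / Nat.gcd 2 (q + 1) := by
  have hω : ω ^ 2 + algebraMap F _ a * ω + 1 = 0 := by simpa using hroot
  have hω₁ : ω ^ 2 ≠ 1 := sq_ne_one_of_irreducible hirr hroot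
  rw [uu_mul_ss]
  calc orderOf (companionSL a : PSL2 F)
      = orderOf (ω ^ 2) := orderOf_eq_orderOf_iff.mpr fun n => by
        rw [mk_companionSL_pow_eq_one_iff, ← alph_eq_zero_iff_pow_eq_one hω hω₁, ← map_alph,
          map_eq_zero]
    _ = (q + 1) / Nat.gcd 2 (q + 1) := by rw [orderOf_pow' _ two_ne_zero, hord, Nat.gcd_comm]

theorem stmt1 (F : Type*) [Field F] [Fintype F] (q : ℕ) (hq : Fintype.card F = q)
    (a : F) (hirr : Irreducible (X ^ 2 + C a * X + 1 : F[X]))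
    (ω : AlgebraicClosure F) (hroot : aeval ω (X ^ 2 + C a * X + 1 : F[X]) = 0)
    (hord : orderOf ω = q + 1) :
    orderOf (uu a * ss : PSL2 F) = (q + 1) / Nat.gcd 2 (q + 1) :=
  stmt1_general F q a hirr ω hroot hord

end
end

section
/- Suppose q is odd, and let b ∈ F be such that for every 0 ≤ k < t there do not exist x ∈ F and y ∈ F\{0} with u(b)·s = (u(a)·s)^k · u(x) · h(y) (i.e. the left coset (u(b)·s)B differs from every coset (u(a)·s)^k B). Then every g ∈ PSL₂(F) has a presentation g = (u(a)·s)^k · (u(b)·s·u(−b))^ℓ · u(x) · h(y) with 0 ≤ k < t, ℓ ∈ {0, 1}, x ∈ F, y ∈ F\{0}, and this presentation is unique in the sense that if (k, ℓ, x, y) and (k', ℓ', x', y') both present g then k = k', ℓ = ℓ', x = x' and y' = ±y. -/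
/-!
The left cosets of `B` in `PSL₂(F)` are the `q + 1` points of the projective line over `F`
(Bruhat decomposition `PSL₂(F) = B ∪ ⋃_z u(z)sB`). The element `c = u(a)s` is the image of
`C = [[-a, 1], [-1, 0]]`, which is annihilated by the irreducible polynomial `λ² + aλ + 1`.
If `cᵐ` fixed a coset, `Cᵐ` would have an eigenvector in `F²` with an eigenvalue `μ ∈ F`,
so `λ² + aλ + 1` would divide `λᵐ - μ` and `ωᵐ = μ` would lie in `F`; since `ω` has order
`q + 1` this is impossible for `0 < m < t`. The same divisibility argument gives `Cᵗ = -1`,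
so `⟨c⟩` acts freely with orbits of size `t`, and the `2t = q + 1` cosets form two orbits:
that of `B` and, by the hypothesis on `b`, that of `u(b)sB = wB` for `w = u(b)su(-b)`.
Uniqueness of `u(x)h(y)` up to the sign of `y` reflects the centre `{±1}` of `SL₂(F)`.
-/

open Polynomial

noncomputable section

open scoped Matrix

theorem dvd_of_aeval_mulVec_eq_zero {K n : Type*} [Field K] [Fintype n] [DecidableEq n]
    {p f : K[X]} (hp : Irreducible p) {M : Matrix n n K} (hM : aeval M p = 0)
    {v : n → K} (hv : v ≠ 0) (hf : aeval M f *ᵥ v = 0) : p ∣ f := by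
  by_contra hpf
  obtain ⟨u, w, huw⟩ := hp.coprime_iff_not_dvd.mpr hpf
  have hMw : aeval M w * aeval M f = 1 := by
    simpa [hM] using congrArg (aeval M) huw
  apply hv
  rw [← Matrix.one_mulVec v, ← hMw, ← Matrix.mulVec_mulVec, hf, Matrix.mulVec_zero]

theorem Matrix.mulVec_col_zero_of_mul_eq_mul {R : Type*} [CommRing R]
    {M G H : Matrix (Fin 2) (Fin 2) R} (h : M * G = G * H) (hH : H 1 0 = 0) :
    M *ᵥ (fun i => G i 0) = H 0 0 • fun i => G i 0 := by
  funext i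
  have := congrFun (congrFun h i) 0
  simp only [Matrix.mul_apply, Fin.sum_univ_two, hH, mul_zero, add_zero] at this
  simp [Matrix.mulVec, dotProduct, Fin.sum_univ_two, this, mul_comm]

theorem pow_ne_algebraMap_of_orderOf_eq {F K : Type*} [Field F] [Fintype F] [Field K]
    [Algebra F K] {ω : K} (hord : orderOf ω = Fintype.card F + 1) {m : ℕ} (hm0 : 0 < m)
    (hm : 2 * m < Fintype.card F + 1) (μ : F) : ω ^ m ≠ algebraMap F K μ := by
  intro hμ
  have hfrob : (ω ^ m) ^ Fintype.card F = ω ^ m := by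
    rw [hμ, ← map_pow, FiniteField.pow_card]
  have h2m : ω ^ (2 * m) = 1 := by
    calc ω ^ (2 * m) = (ω ^ m) ^ Fintype.card F * ω ^ m := by rw [hfrob, two_mul, pow_add]
      _ = (ω ^ orderOf ω) ^ m := by rw [hord]; ring
      _ = 1 := by rw [pow_orderOf_eq_one, one_pow]
  have := Nat.le_of_dvd (by omega) (orderOf_dvd_of_pow_eq_one h2m)
  omega

section usMatrix

variable {F : Type*} [Field F]

def usMatrix (a : F) : Matrix (Fin 2) (Fin 2) F := !![-a, 1; -1, 0]

theorem aeval_usMatrix (a : F) : aeval (usMatrix a) (X ^ 2 + C a * X + 1 : F[X]) = 0 := by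
  ext i j
  fin_cases i <;> fin_cases j <;>
    simp [usMatrix, sq, Matrix.mul_apply, Fin.sum_univ_two, Matrix.algebraMap_eq_diagonal]

variable {K : Type*} [Field K] [Algebra F K] {a : F}
  (hirr : Irreducible (X ^ 2 + C a * X + 1 : F[X])) {ω : K}
  (hroot : aeval ω (X ^ 2 + C a * X + 1 : F[X]) = 0)
include hirr hroot

theorem usMatrix_pow_eq_neg_one {t : ℕ} (ht : ω ^ t = -1) : usMatrix a ^ t = -1 := by
  have hmin := minpoly.eq_of_irreducible_of_monic hirr hroot (by monicity!)
  have hdvd : (X ^ 2 + C a * X + 1 : F[X]) ∣ X ^ t + 1 := by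
    rw [hmin]
    exact minpoly.dvd F ω (by simp [ht])
  have := aeval_eq_zero_of_dvd_aeval_eq_zero hdvd (aeval_usMatrix a)
  simpa [add_eq_zero_iff_eq_neg] using this

theorem algebraMap_eq_pow_of_usMatrix_pow_mulVec {m : ℕ} {v : Fin 2 → F} (hv : v ≠ 0) {μ : F}
    (h : usMatrix a ^ m *ᵥ v = μ • v) : algebraMap F K μ = ω ^ m := by
  have hdvd : (X ^ 2 + C a * X + 1 : F[X]) ∣ X ^ m - C μ :=
    dvd_of_aeval_mulVec_eq_zero hirr (aeval_usMatrix a) hv (by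
      rw [map_sub, aeval_X_pow, aeval_C, Matrix.sub_mulVec, h, Algebra.algebraMap_eq_smul_one,
        Matrix.smul_mulVec, Matrix.one_mulVec, sub_self])
  have := aeval_eq_zero_of_dvd_aeval_eq_zero hdvd hroot
  rw [map_sub, aeval_X_pow, aeval_C, sub_eq_zero] at this
  exact this.symm

end usMatrix

section OrbitCounting

variable {G X : Type*} [Group G] [MulAction G X] {c : G} {t : ℕ}

theorem eq_of_pow_smul_eq_pow_smul (hfree : ∀ m, 0 < m → m < t → ∀ x : X, c ^ m • x ≠ x)
    (x : X) {k k' : ℕ} (hk : k < t) (hk' : k' < t) (h : c ^ k • x = c ^ k' • x) : k = k' := by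
  wlog hle : k ≤ k' generalizing k k'
  · exact (this hk' hk h.symm (by omega)).symm
  by_contra hne
  apply hfree (k' - k) (by omega) (by omega) (c ^ k • x)
  rw [smul_smul, ← pow_add, Nat.sub_add_cancel hle, h]

theorem injective_pow_mul_pow_smul (hct : c ^ t = 1)
    (hfree : ∀ m, 0 < m → m < t → ∀ x : X, c ^ m • x ≠ x) {w : G} {x : X}
    (hw : ∀ k < t, w • x ≠ c ^ k • x) :
    Function.Injective fun p : Fin t × Fin 2 => (c ^ (p.1 : ℕ) * w ^ (p.2 : ℕ)) • x := by
  have hcross : ∀ {k k' : ℕ}, k' < t → c ^ k • x ≠ c ^ k' • w • x := by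
    intro k k' hk' h
    apply hw ((t - k' + k) % t) (Nat.mod_lt _ (by omega))
    rw [← pow_eq_pow_mod _ hct, pow_add, mul_smul, h, smul_smul, ← pow_add,
      Nat.sub_add_cancel hk'.le, hct, one_smul]
  rintro ⟨k, l⟩ ⟨k', l'⟩ h
  simp only [mul_smul] at h
  fin_cases l <;> fin_cases l' <;> simp only [pow_zero, one_smul, pow_one] at h
  · exact Prod.ext (Fin.ext (eq_of_pow_smul_eq_pow_smul hfree x k.2 k'.2 h)) rfl
  · exact absurd h (hcross k'.2)
  · exact absurd h.symm (hcross k.2)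
  · exact Prod.ext (Fin.ext (eq_of_pow_smul_eq_pow_smul hfree (w • x) k.2 k'.2 h)) rfl

end OrbitCounting

namespace PSL2

variable {F : Type*} [Field F]

theorem mk_eq_mk_iff {A B : SL2 F} :
    (QuotientGroup.mk A : PSL2 F) = QuotientGroup.mk B ↔
      (B : Matrix (Fin 2) (Fin 2) F) = A ∨ (B : Matrix (Fin 2) (Fin 2) F) = -A := by
  have hB : (B : Matrix (Fin 2) (Fin 2) F) = A * (A⁻¹ * B : SL2 F) := by
    rw [← Matrix.SpecialLinearGroup.coe_mul, mul_inv_cancel_left]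
  rw [QuotientGroup.eq, Matrix.SpecialLinearGroup.mem_center_iff, Fintype.card_fin]
  constructor
  · rintro ⟨r, hr, hrA⟩
    rcases sq_eq_one_iff.mp hr with rfl | rfl
    · left; rw [hB, ← hrA]; simp
    · right; rw [hB, ← hrA]; simp [← Matrix.smul_one_eq_diagonal]
  · rintro (h | h)
    · refine ⟨1, one_pow _, ?_⟩
      rw [Matrix.SpecialLinearGroup.coe_mul, h, Matrix.SpecialLinearGroup.coe_inv]
      simp [Matrix.adjugate_mul]
    · refine ⟨-1, by norm_num, ?_⟩
      rw [Matrix.SpecialLinearGroup.coe_mul, h, Matrix.SpecialLinearGroup.coe_inv]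
      simp [Matrix.adjugate_mul, ← Matrix.smul_one_eq_diagonal]

def upperSL2 (F : Type*) [Field F] : Subgroup (SL2 F) where
  carrier := {A | A 1 0 = 0}
  mul_mem' {A B} hA hB := by
    simp_all [Matrix.SpecialLinearGroup.coe_mul, Matrix.mul_apply, Fin.sum_univ_two]
  one_mem' := by simp
  inv_mem' {A} hA := by
    simp_all [Matrix.SpecialLinearGroup.coe_inv, Matrix.adjugate_fin_two]

def borel (F : Type*) [Field F] : Subgroup (PSL2 F) :=
  (upperSL2 F).map (QuotientGroup.mk' _)

theorem mk_mem_borel_iff {A : SL2 F} :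
    (QuotientGroup.mk A : PSL2 F) ∈ borel F ↔ A 1 0 = 0 := by
  constructor
  · rintro ⟨B, hB : B 1 0 = 0, hBA⟩
    rcases mk_eq_mk_iff.mp hBA with h | h
    · exact (congrFun (congrFun h 1) 0).trans hB
    · exact (congrFun (congrFun h 1) 0).trans (by rw [Matrix.neg_apply, hB, neg_zero])
  · exact fun hA => ⟨A, hA, rfl⟩

def uSL (x : F) : SL2 F := ⟨!![1, x; 0, 1], by simp [Matrix.det_fin_two_of]⟩

def hSL (y : F) (hy : y ≠ 0) : SL2 F :=
  ⟨!![y, 0; 0, y⁻¹], by simp [Matrix.det_fin_two_of, mul_inv_cancel₀ hy]⟩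

@[simp] theorem coe_uSL (x : F) : (uSL x : Matrix (Fin 2) (Fin 2) F) = !![1, x; 0, 1] := rfl

@[simp] theorem coe_hSL (y : F) (hy : y ≠ 0) :
    (hSL y hy : Matrix (Fin 2) (Fin 2) F) = !![y, 0; 0, y⁻¹] := rfl

theorem uu_mul_hh_eq_mk (x y : F) (hy : y ≠ 0) :
    uu x * hh y hy = QuotientGroup.mk (uSL x * hSL y hy) := rfl

theorem uSL_mul_hSL_apply (x y : F) (hy : y ≠ 0) :
    ((uSL x * hSL y hy : SL2 F) : Matrix (Fin 2) (Fin 2) F) = !![y, x * y⁻¹; 0, y⁻¹] := by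
  simp [Matrix.SpecialLinearGroup.coe_mul]

theorem mem_borel_iff {g : PSL2 F} :
    g ∈ borel F ↔ ∃ (x y : F) (hy : y ≠ 0), g = uu x * hh y hy := by
  constructor
  · rintro ⟨A, hA : A 1 0 = 0, rfl⟩
    have hdet : A 0 0 * A 1 1 = 1 := by
      have := Matrix.SpecialLinearGroup.det_coe A
      rwa [Matrix.det_fin_two, hA, mul_zero, sub_zero] at this
    have h00 : A 0 0 ≠ 0 := left_ne_zero_of_mul_eq_one hdet
    refine ⟨A 0 1 * A 0 0, A 0 0, h00, ?_⟩
    rw [QuotientGroup.mk'_apply, uu_mul_hh_eq_mk, mk_eq_mk_iff, uSL_mul_hSL_apply]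
    left
    ext i j
    fin_cases i <;> fin_cases j <;> simp [hA, h00, eq_inv_of_mul_eq_one_right hdet]
  · rintro ⟨x, y, hy, rfl⟩
    rw [uu_mul_hh_eq_mk, mk_mem_borel_iff]
    simp

theorem coset_eq_iff {g g' : PSL2 F} : ((g : PSL2 F) : PSL2 F ⧸ borel F) = g' ↔
    ∃ (x y : F) (hy : y ≠ 0), g' = g * uu x * hh y hy := by
  simp only [QuotientGroup.eq, mem_borel_iff, inv_mul_eq_iff_eq_mul, mul_assoc]

theorem uu_mul_hh_injective {x x' y y' : F} {hy : y ≠ 0} {hy' : y' ≠ 0}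
    (h : uu x * hh y hy = uu x' * hh y' hy') : x = x' ∧ (y' = y ∨ y' = -y) := by
  rw [uu_mul_hh_eq_mk, uu_mul_hh_eq_mk, mk_eq_mk_iff, uSL_mul_hSL_apply, uSL_mul_hSL_apply] at h
  rcases h with h | h
  · have h00 : y' = y := congrFun (congrFun h 0) 0
    have h01 : x' * y'⁻¹ = x * y⁻¹ := congrFun (congrFun h 0) 1
    subst h00
    exact ⟨(mul_right_cancel₀ (inv_ne_zero hy) h01).symm, .inl rfl⟩
  · have h00 : y' = -y := congrFun (congrFun h 0) 0
    have h01 : x' * y'⁻¹ = -(x * y⁻¹) := congrFun (congrFun h 0) 1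
    subst h00
    rw [inv_neg, mul_neg, neg_inj] at h01
    exact ⟨(mul_right_cancel₀ (inv_ne_zero hy) h01).symm, .inr rfl⟩

def sSL : SL2 F := ⟨!![0, 1; -1, 0], by simp [Matrix.det_fin_two_of]⟩

@[simp] theorem coe_sSL : ((sSL : SL2 F) : Matrix (Fin 2) (Fin 2) F) = !![0, 1; -1, 0] := rfl

theorem uu_mul_ss_eq_mk (a : F) : uu a * ss = QuotientGroup.mk (uSL a * sSL) := rfl

theorem mem_borel_or_exists_inv_mul_mem_borel (g : PSL2 F) :
    g ∈ borel F ∨ ∃ z : F, (uu z * ss)⁻¹ * g ∈ borel F := by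
  obtain ⟨A, rfl⟩ := QuotientGroup.mk_surjective g
  by_cases hA : A 1 0 = 0
  · exact .inl (mk_mem_borel_iff.mpr hA)
  have hentry : ∀ z : F, ((uSL z * sSL)⁻¹ * A) 1 0 = A 0 0 - z * A 1 0 := by
    intro z
    simp [Matrix.SpecialLinearGroup.coe_mul, Matrix.SpecialLinearGroup.coe_inv,
      Matrix.adjugate_fin_two, Matrix.mul_apply, Fin.sum_univ_two, sub_eq_add_neg]
  refine .inr ⟨A 0 0 / A 1 0, ?_⟩
  rw [uu_mul_ss_eq_mk, ← QuotientGroup.mk_inv, ← QuotientGroup.mk_mul, mk_mem_borel_iff, hentry,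
    div_mul_cancel₀ _ hA, sub_self]

theorem card_quotient_borel_le [Fintype F] :
    Nat.card (PSL2 F ⧸ borel F) ≤ Fintype.card F + 1 := by
  let f : Option F → PSL2 F ⧸ borel F :=
    fun o => o.elim (1 : PSL2 F) fun z => (uu z * ss : PSL2 F)
  have hf : Function.Surjective f := by
    intro x
    obtain ⟨g, rfl⟩ := QuotientGroup.mk_surjective x
    rcases mem_borel_or_exists_inv_mul_mem_borel g with hg | ⟨z, hz⟩
    · exact ⟨none, QuotientGroup.eq.mpr (by simpa using hg)⟩
    · exact ⟨some z, QuotientGroup.eq.mpr hz⟩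
  simpa using Nat.card_le_card_of_surjective f hf

theorem uu_mem_borel (x : F) : uu x ∈ borel F :=
  mk_mem_borel_iff.mpr rfl

theorem coe_uSL_mul_sSL (a : F) :
    ((uSL a * sSL : SL2 F) : Matrix (Fin 2) (Fin 2) F) = usMatrix a := by
  ext i j
  fin_cases i <;> fin_cases j <;> simp [usMatrix, Matrix.SpecialLinearGroup.coe_mul]

variable [Fintype F] {K : Type*} [Field K] [Algebra F K] {a : F}
  (hirr : Irreducible (X ^ 2 + C a * X + 1 : F[X])) {ω : K}
  (hroot : aeval ω (X ^ 2 + C a * X + 1 : F[X]) = 0) (hord : orderOf ω = Fintype.card F + 1)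
include hirr hroot hord

theorem uu_mul_ss_pow_eq_one {t : ℕ} (h2t : 2 * t = Fintype.card F + 1) :
    (uu a * ss) ^ t = 1 := by
  have hωt : ω ^ t = -1 := by
    have := (IsPrimitiveRoot.orderOf ω).pow_of_dvd (p := t) (by omega)
      (by rw [hord, ← h2t]; exact dvd_mul_left t 2)
    rw [hord, ← h2t, Nat.mul_div_cancel _ (by omega)] at this
    exact this.eq_neg_one_of_two_right
  rw [uu_mul_ss_eq_mk, ← QuotientGroup.mk_pow, ← QuotientGroup.mk_one, mk_eq_mk_iff,
    Matrix.SpecialLinearGroup.coe_pow, coe_uSL_mul_sSL, usMatrix_pow_eq_neg_one hirr hroot hωt]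
  simp

theorem uu_mul_ss_pow_smul_ne {m : ℕ} (hm0 : 0 < m) (hm : 2 * m < Fintype.card F + 1)
    (x : PSL2 F ⧸ borel F) : (uu a * ss) ^ m • x ≠ x := by
  obtain ⟨G, rfl⟩ : ∃ G : SL2 F, ((G : PSL2 F) : PSL2 F ⧸ borel F) = x := by
    obtain ⟨g, rfl⟩ := QuotientGroup.mk_surjective x
    obtain ⟨G, rfl⟩ := QuotientGroup.mk_surjective g
    exact ⟨G, rfl⟩
  intro h
  rw [MulAction.Quotient.smul_coe, smul_eq_mul, eq_comm, QuotientGroup.eq, uu_mul_ss_eq_mk,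
    ← QuotientGroup.mk_pow, ← QuotientGroup.mk_inv, ← QuotientGroup.mk_mul,
    ← QuotientGroup.mk_mul, mk_mem_borel_iff] at h
  set H := G⁻¹ * ((uSL a * sSL) ^ m * G)
  have hGH : usMatrix a ^ m * G = G * H := by
    rw [← coe_uSL_mul_sSL, ← Matrix.SpecialLinearGroup.coe_pow,
      ← Matrix.SpecialLinearGroup.coe_mul, ← Matrix.SpecialLinearGroup.coe_mul, mul_inv_cancel_left]
  have hv : (fun i => G i 0) ≠ 0 := by
    intro hv
    have := Matrix.SpecialLinearGroup.det_coe G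
    rw [Matrix.det_fin_two, congrFun hv 0, congrFun hv 1] at this
    simp at this
  exact pow_ne_algebraMap_of_orderOf_eq hord hm0 hm (H 0 0)
    (algebraMap_eq_pow_of_usMatrix_pow_mulVec hirr hroot hv
      (Matrix.mulVec_col_zero_of_mul_eq_mul hGH h)).symm

end PSL2

open PSL2 in
theorem stmt3 (F : Type*) [Field F] [Fintype F] (q : ℕ) (hq : Fintype.card F = q)
    (a : F) (hirr : Irreducible (X ^ 2 + C a * X + 1 : F[X]))
    (ω : AlgebraicClosure F) (hroot : aeval ω (X ^ 2 + C a * X + 1 : F[X]) = 0)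
    (hord : orderOf ω = q + 1)
    (hqodd : Odd q) (t : ℕ) (ht : t = (q + 1) / Nat.gcd 2 (q + 1)) (b : F)
    (hb : ∀ k : ℕ, k < t → ¬ ∃ (x y : F) (hy : y ≠ 0),
      (uu b * ss : PSL2 F) = (uu a * ss) ^ k * uu x * hh y hy) :
    ∀ g : PSL2 F,
      (∃ (k l : ℕ) (x y : F) (hy : y ≠ 0), k < t ∧ l ≤ 1 ∧
        g = (uu a * ss) ^ k * (uu b * ss * uu (-b)) ^ l * uu x * hh y hy) ∧
      ∀ (k k' l l' : ℕ) (x x' y y' : F) (hy : y ≠ 0) (hy' : y' ≠ 0),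
        k < t → k' < t → l ≤ 1 → l' ≤ 1 →
        g = (uu a * ss) ^ k * (uu b * ss * uu (-b)) ^ l * uu x * hh y hy →
        g = (uu a * ss) ^ k' * (uu b * ss * uu (-b)) ^ l' * uu x' * hh y' hy' →
        k = k' ∧ l = l' ∧ x = x' ∧ (y' = y ∨ y' = -y) := by
  subst hq
  have h2t : 2 * t = Fintype.card F + 1 := by
    rw [ht, Nat.gcd_eq_left (even_iff_two_dvd.mp hqodd.add_one)]
    exact Nat.mul_div_cancel' (even_iff_two_dvd.mp hqodd.add_one)
  set c := uu a * ss
  set w := uu b * ss * uu (-b)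
  have hw : ∀ k < t, w • ((1 : PSL2 F) : PSL2 F ⧸ borel F) ≠ c ^ k • ((1 : PSL2 F) : _) := by
    intro k hk hwk
    refine hb k hk (coset_eq_iff.mp ?_)
    rw [← QuotientGroup.mk_mul_of_mem (uu b * ss) (uu_mem_borel (-b))]
    simpa using hwk.symm
  have hΨ := (injective_pow_mul_pow_smul (uu_mul_ss_pow_eq_one hirr hroot hord h2t)
    (fun m hm0 hmt => uu_mul_ss_pow_smul_ne hirr hroot hord hm0 (by omega))
    hw).bijective_of_nat_card_le
    (by simpa [← h2t, mul_comm] using card_quotient_borel_le (F := F))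
  simp only [MulAction.Quotient.smul_coe, smul_eq_mul, mul_one] at hΨ
  intro g
  refine ⟨?_, fun k k' l l' x x' y y' hy hy' hk hk' hl hl' h h' => ?_⟩
  · obtain ⟨⟨k, l⟩, hkl⟩ := hΨ.2 g
    obtain ⟨x, y, hy, h⟩ := coset_eq_iff.mp hkl
    exact ⟨k, l, x, y, hy, k.2, by omega, h⟩
  · have := @hΨ.1 (⟨k, hk⟩, ⟨l, by omega⟩) (⟨k', hk'⟩, ⟨l', by omega⟩)
      ((coset_eq_iff.mpr ⟨x, y, hy, h⟩).trans (coset_eq_iff.mpr ⟨x', y', hy', h'⟩).symm)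
    simp only [Prod.ext_iff, Fin.ext_iff] at this
    obtain ⟨rfl, rfl⟩ := this
    rw [h, mul_assoc _ (uu x), mul_assoc _ (uu x')] at h'
    exact ⟨rfl, rfl, uu_mul_hh_injective (mul_left_cancel h')⟩
end
end

section
/- Suppose F has characteristic 2 (so t = q + 1). Then the q field elements a₁, a₂, …, a_q are pairwise distinct; consequently they are exactly the q elements of F. -/
open Polynomial

noncomputable section

/-! In characteristic 2 the root `ω` gives `a = ω + ω⁻¹`, so the Lucas-type sequence `α_n = alph a n`
satisfies `α_n (ω - ω⁻¹) = ωⁿ - ω⁻ⁿ`; since `orderOf ω = q + 1` is odd, `α_n ≠ 0` for `0 < n ≤ q`.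
Hence `a_k = α_{k+1} / α_k` for `1 ≤ k ≤ q`, and the identity `α_{i+1} α_{i+d} - α_{i+d+1} α_i = α_d`
turns `a_i = a_{i+d}` into `α_d = 0`, i.e. `d = 0`. Being `q` distinct elements, `a_1, …, a_q` exhaust `F`. -/

section Lucas

variable {F : Type*} [Field F] (a : F)

theorem alph_succ_mul_alph_add_sub (i d : ℕ) :
    alph a (i + 1) * alph a (i + d) - alph a (i + d + 1) * alph a i = alph a d := by
  induction i with
  | zero => simp [alph]
  | succ i ih =>
    rw [show i + 1 + d = i + d + 1 by ring, show alph a (i + 1 + 1) = a * alph a (i + 1) - alph a i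
      from rfl, show alph a (i + d + 1 + 1) = a * alph a (i + d + 1) - alph a (i + d) from rfl, ← ih]
    ring

theorem aSeq_mul_alph {k : ℕ} (hk : 1 ≤ k) (halph : ∀ n, 1 ≤ n → n ≤ k → alph a n ≠ 0) :
    aSeq a k * alph a k = alph a (k + 1) := by
  induction k, hk using Nat.le_induction with
  | base => simp [aSeq, alph]
  | succ k hk ih =>
    have ih := ih fun n hn hnk ↦ halph n hn (by omega)
    have hk1 : aSeq a k ≠ 0 := by
      rintro h
      exact halph (k + 1) (by omega) le_rfl (by rw [← ih, h, zero_mul])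
    rw [aSeq, show alph a (k + 1 + 1) = a * alph a (k + 1) - alph a k from rfl, ← ih]
    field_simp

theorem aSeq_injOn_Icc {N : ℕ} (halph : ∀ n, 1 ≤ n → n ≤ N → alph a n ≠ 0) :
    Set.InjOn (aSeq a) (Set.Icc 1 N) := by
  suffices h : ∀ i d, 1 ≤ i → i + d ≤ N → aSeq a i = aSeq a (i + d) → d = 0 by
    intro i ⟨hi, hiN⟩ j ⟨hj, hjN⟩ hij
    rcases le_total i j with hle | hle
    · obtain ⟨d, rfl⟩ := Nat.exists_eq_add_of_le hle
      simp [h i d hi hjN hij]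
    · obtain ⟨d, rfl⟩ := Nat.exists_eq_add_of_le hle
      simp [h j d hj hiN hij.symm]
  intro i d hi hN heq
  have hi' := aSeq_mul_alph a hi fun n hn hni ↦ halph n hn (by omega)
  have hj' := aSeq_mul_alph a (by omega : 1 ≤ i + d) fun n hn hni ↦ halph n hn (by omega)
  have hd : alph a d = 0 := by
    rw [← alph_succ_mul_alph_add_sub, ← hi', ← hj', heq]
    ring
  by_contra hd0
  exact halph d (by omega) (by omega) hd

end Lucas

section Roots

variable {F K : Type*} [Field F] [Field K] (φ : F →+* K) {a : F} {ω : K}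

theorem map_alph_mul_sub_inv (hω : ω ≠ 0) (ha : φ a = ω + ω⁻¹) (n : ℕ) :
    φ (alph a n) * (ω - ω⁻¹) = ω ^ n - ω⁻¹ ^ n := by
  induction n using Nat.strong_induction_on with
  | _ n ih =>
    match n, ih with
    | 0, _ => simp [alph]
    | 1, _ => simp [alph]
    | n + 2, ih =>
      rw [show alph a (n + 2) = a * alph a (n + 1) - alph a n from rfl, map_sub, map_mul, ha]
      linear_combination (ω + ω⁻¹) * ih (n + 1) (by omega) - ih n (by omega)
        + (ω ^ n - ω⁻¹ ^ n) * mul_inv_cancel₀ hω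

theorem alph_ne_zero_of_lt_orderOf (hω : ω ≠ 0) (ha : φ a = ω + ω⁻¹) (hodd : Odd (orderOf ω))
    {n : ℕ} (hn : 0 < n) (hnω : n < orderOf ω) : alph a n ≠ 0 := by
  intro h
  have hpow : ω ^ n = ω⁻¹ ^ n := by
    simpa [h, sub_eq_zero] using (map_alph_mul_sub_inv φ hω ha n).symm
  have h2n : ω ^ (2 * n) = 1 := by
    rw [pow_mul', sq]
    nth_rewrite 2 [hpow]
    rw [← mul_pow, mul_inv_cancel₀ hω, one_pow]
  have hdvd : orderOf ω ∣ n :=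
    (Nat.Coprime.dvd_of_dvd_mul_left (Nat.coprime_two_right.mpr hodd)
      (orderOf_dvd_of_pow_eq_one h2n))
  exact absurd (Nat.le_of_dvd hn hdvd) (not_le.mpr hnω)

end Roots

theorem eq_add_inv_of_sq_add_mul_add_one_eq_zero {K : Type*} [Field K] [CharP K 2] {b ω : K}
    (h : ω ^ 2 + b * ω + 1 = 0) : b = ω + ω⁻¹ := by
  have hω : ω ≠ 0 := by rintro rfl; simp at h
  have hb : b * ω = ω ^ 2 + 1 := by
    rw [← CharTwo.neg_eq (ω ^ 2 + 1)]
    linear_combination h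
  field_simp
  linear_combination hb

theorem stmt5_general (F : Type*) [Field F] [Fintype F] (q : ℕ) (hq : Fintype.card F = q)
    (hchar : ringChar F = 2)
    (a : F)
    (ω : AlgebraicClosure F) (hroot : aeval ω (X ^ 2 + C a * X + 1 : F[X]) = 0)
    (hord : orderOf ω = q + 1) :
    (∀ i j : ℕ, 1 ≤ i → i ≤ q → 1 ≤ j → j ≤ q → aSeq a i = aSeq a j → i = j) ∧
    ∀ c : F, ∃ k : ℕ, 1 ≤ k ∧ k ≤ q ∧ aSeq a k = c := by
  have : CharP F 2 := ringChar.of_eq hchar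
  have ha : algebraMap F _ a = ω + ω⁻¹ :=
    eq_add_inv_of_sq_add_mul_add_one_eq_zero (by simpa using hroot)
  have hω : ω ≠ 0 := by rintro rfl; simp at hord
  have hodd : Odd (orderOf ω) := by
    rw [hord, Nat.odd_add_one, Nat.not_odd_iff, ← hq]
    exact FiniteField.even_card_of_char_two hchar
  have hinj : Set.InjOn (aSeq a) (Set.Icc 1 q) := aSeq_injOn_Icc a fun n hn hnq ↦
    alph_ne_zero_of_lt_orderOf _ hω ha hodd hn (by omega)
  refine ⟨fun i j hi hiq hj hjq ↦ hinj ⟨hi, hiq⟩ ⟨hj, hjq⟩, fun c ↦ ?_⟩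
  obtain ⟨k, hk, rfl⟩ := Finset.surjOn_of_injOn_of_card_le (s := Finset.Icc 1 q) (aSeq a)
    (by simp [Set.MapsTo]) (by simpa using hinj) (by simp [hq]) (Finset.mem_univ c)
  simp only [Finset.coe_Icc, Set.mem_Icc] at hk
  exact ⟨k, hk.1, hk.2, rfl⟩

theorem stmt5 (F : Type*) [Field F] [Fintype F] (q : ℕ) (hq : Fintype.card F = q)
    (hchar : ringChar F = 2)
    (a : F) (hirr : Irreducible (X ^ 2 + C a * X + 1 : F[X]))
    (ω : AlgebraicClosure F) (hroot : aeval ω (X ^ 2 + C a * X + 1 : F[X]) = 0)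
    (hord : orderOf ω = q + 1) :
    (∀ i j : ℕ, 1 ≤ i → i ≤ q → 1 ≤ j → j ≤ q → aSeq a i = aSeq a j → i = j) ∧
    ∀ c : F, ∃ k : ℕ, 1 ≤ k ∧ k ≤ q ∧ aSeq a k = c :=
  stmt5_general F q hq hchar a ω hroot hord

end
end

section
/- Suppose q is odd (so t = (q+1)/2). Then the q field elements a₁, a₂, …, a_{t−1}, b₀, b₁, …, b_{t−1} are pairwise distinct; consequently they are exactly the q elements of F. -/
open Polynomial

noncomputable section

/-!
The recursion `x ↦ a - x⁻¹` is the Möbius action of the companion matrix `M = !![a, -1; 1, 0]`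
of `λ² - aλ + 1` on the projective line `OnePoint F = F ∪ {∞}`, so that `a_k = M ^ k • ∞` and
`b_ℓ = M ^ ℓ • b` as long as no `∞` is met. The entries of `M ^ n` are the Dickson values `α`,
and since `λ² - aλ + 1` has no root in `F`, `M ^ n` fixes a point iff `α_{n-1}(a) = 0`. The closed
form of `α` in the root `-ω` turns this into `ω ^ (2 n) = 1`, i.e. `t ∣ n`. Hence every point of
the line has period exactly `t`, and the `q + 1 = 2 t` points are the union of the orbits of `∞`
and of `b`, which are disjoint by the choice of `b`.
-/

open OnePoint Matrix MulAction

section DicksonZeros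

variable {F : Type*} [Field F] (a : F)

lemma alph_add_two (n : ℕ) : alph a (n + 2) = a * alph a (n + 1) - alph a n := rfl

lemma algebraMap_alph_mul_eq {K : Type*} [Field K] [Algebra F K] {μ : K}
    (hμ : μ ^ 2 + 1 = algebraMap F K a * μ) (n : ℕ) :
    algebraMap F K (alph a n) * (μ ^ 2 - 1) * μ ^ n = ((μ ^ 2) ^ n - 1) * μ := by
  induction n using Nat.twoStepInduction with
  | zero => simp [alph]
  | one => simp [alph]
  | more n ih₁ ih₂ =>
    rw [alph_add_two, map_sub, map_mul]
    linear_combination algebraMap F K a * μ * ih₂ - μ ^ 2 * ih₁ - ((μ ^ 2) ^ (n + 1) - 1) * μ * hμ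

lemma alph_eq_zero_iff {K : Type*} [Field K] [Algebra F K] {μ : K}
    (hμ : μ ^ 2 + 1 = algebraMap F K a * μ) (hμ₂ : μ ^ 2 ≠ 1) (n : ℕ) :
    alph a n = 0 ↔ (μ ^ 2) ^ n = 1 := by
  have hμ₀ : μ ≠ 0 := by rintro rfl; simp at hμ
  calc alph a n = 0 ↔ algebraMap F K (alph a n) * (μ ^ 2 - 1) * μ ^ n = 0 := by
        simp [sub_ne_zero.2 hμ₂, hμ₀]
    _ ↔ (μ ^ 2) ^ n = 1 := by rw [algebraMap_alph_mul_eq a hμ]; simp [hμ₀, sub_eq_zero]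

lemma alph_eq_zero_iff_dvd {K : Type*} [Field K] [Algebra F K] {ω : K}
    (hω : aeval ω (X ^ 2 + C a * X + 1 : F[X]) = 0) {t : ℕ} (ht : 1 < t)
    (hord : orderOf ω = 2 * t) (n : ℕ) : alph a n = 0 ↔ t ∣ n := by
  have hμ : (-ω) ^ 2 + 1 = algebraMap F K a * -ω := by
    simp only [map_add, map_mul, map_pow, aeval_X, aeval_C, map_one] at hω
    linear_combination hω
  have hμ₂ : (-ω) ^ 2 ≠ 1 := by
    rw [neg_sq]
    intro h
    have := Nat.le_of_dvd two_pos (hord ▸ orderOf_dvd_of_pow_eq_one h)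
    omega
  rw [alph_eq_zero_iff a hμ hμ₂, neg_sq, ← pow_mul, ← orderOf_dvd_iff_pow_eq_one, hord,
    Nat.mul_dvd_mul_iff_left two_pos]

lemma sq_sub_mul_add_one_ne_zero (hirr : Irreducible (X ^ 2 + C a * X + 1 : F[X])) (x : F) :
    x ^ 2 - a * x + 1 ≠ 0 := by
  intro hx
  have hroot : (X ^ 2 + C a * X + 1 : F[X]).IsRoot (-x) := by
    simp only [IsRoot, eval_add, eval_pow, eval_mul, eval_X, eval_C, eval_one]
    linear_combination hx
  have hdeg : (X ^ 2 + C a * X + 1 : F[X]).degree = 2 := by compute_degree!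
  have := degree_eq_one_of_irreducible_of_root hirr hroot
  rw [hdeg] at this
  exact absurd this (by decide)

end DicksonZeros

section CompanionMatrix

variable {F : Type*} [Field F] (a : F)

def companionGL : GL (Fin 2) F :=
  GeneralLinearGroup.mkOfDetNeZero !![a, -1; 1, 0] (by simp [det_fin_two_of])

lemma companionGL_pow_val (n : ℕ) :
    (companionGL a : Matrix (Fin 2) (Fin 2) F) ^ n =
      !![alph a (n + 1), -alph a n; alph a n, alph a (n + 1) - a * alph a n] := by
  induction n with
  | zero => ext i j; fin_cases i <;> fin_cases j <;> simp [alph]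
  | succ n ih =>
    rw [pow_succ, ih, companionGL, GeneralLinearGroup.val_mkOfDetNeZero, mul_fin_two,
      alph_add_two]
    simp only [EmbeddingLike.apply_eq_iff_eq, vecCons_inj, and_true]
    refine ⟨⟨?_, ?_⟩, ?_, ?_⟩ <;> ring

variable [DecidableEq F]

lemma companionGL_smul_infty : companionGL a • (∞ : OnePoint F) = ↑a := by
  simp [smul_infty_eq_ite, companionGL]

lemma companionGL_smul_coe (x : F) :
    companionGL a • (x : OnePoint F) = if x = 0 then ∞ else ↑(a - x⁻¹) := by
  by_cases hx : x = 0
  · simp [smul_some_eq_ite, companionGL, hx]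
  · simp [smul_some_eq_ite, companionGL, hx, add_div, neg_div, sub_eq_add_neg]

lemma companionGL_pow_smul_eq_self_iff (hQ : ∀ x : F, x ^ 2 - a * x + 1 ≠ 0) (n : ℕ)
    (c : OnePoint F) : companionGL a ^ n • c = c ↔ alph a n = 0 := by
  cases c with
  | infty => simp [smul_infty_eq_self_iff, companionGL_pow_val]
  | coe c =>
    have hfix : (companionGL a ^ n).fixpointPolynomial.aeval c =
        alph a n * (c ^ 2 - a * c + 1) := by
      simp only [GeneralLinearGroup.fixpointPolynomial, Units.val_pow_eq_pow_val,
        companionGL_pow_val, of_apply, cons_val', cons_val_zero, cons_val_fin_one, cons_val_one,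
        coe_aeval_eq_eval, eval_add, eval_sub, eval_mul, eval_C, eval_pow, eval_X]
      ring
    rw [← GeneralLinearGroup.fixpointPolynomial_aeval_eq_zero_iff, hfix, mul_eq_zero,
      or_iff_left (hQ c)]

lemma companionGL_pow_smul_coe_eq {s : ℕ → F} (hs : ∀ n, s (n + 1) = a - (s n)⁻¹) {n : ℕ}
    (h : ∀ m ≤ n, companionGL a ^ m • (s 0 : OnePoint F) ≠ ∞) :
    companionGL a ^ n • (s 0 : OnePoint F) = s n := by
  induction n with
  | zero => simp
  | succ n ih =>
    have hne := h (n + 1) le_rfl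
    rw [pow_succ', mul_smul, ih fun m hm ↦ h m (by omega), companionGL_smul_coe] at hne ⊢
    split_ifs at hne ⊢
    · exact absurd rfl hne
    · rw [hs]

end CompanionMatrix

section PeriodicOrbits

variable {G α : Type*} [Group G] [MulAction G α] {g : G} {t : ℕ}

lemma pow_smul_injOn_Iio_period (x : α) :
    Set.InjOn (fun k : ℕ ↦ g ^ k • x) (Set.Iio (period g x)) := by
  rw [period_eq_minimalPeriod]
  simpa only [smul_iterate] using Function.iterate_injOn_Iio_minimalPeriod (f := (g • ·)) (x := x)

variable (hper : ∀ z : α, period g z = t) (ht : 0 < t)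
include hper ht

lemma exists_pow_smul_eq_of_pow_smul_eq {x y : α} {i j : ℕ} (h : g ^ i • x = g ^ j • y) :
    ∃ k < t, g ^ k • x = y := by
  -- `g ^ ((t - 1) * j)` undoes `g ^ j` on `y`, since `g ^ (t * j)` fixes `y`.
  refine ⟨((t - 1) * j + i) % t, Nat.mod_lt _ ht, ?_⟩
  have hmod := pow_mod_period_smul ((t - 1) * j + i) (m := g) (a := x)
  rw [hper x] at hmod
  rw [hmod, pow_add, mul_smul, h, ← mul_smul, ← pow_add, pow_smul_eq_iff_period_dvd, hper y]
  exact ⟨j, by rw [← Nat.succ_mul, Nat.sub_one, Nat.succ_pred_eq_of_pos ht]⟩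

lemma exists_pow_smul_eq_or_exists_pow_smul_eq [Fintype α] (hcard : Fintype.card α = 2 * t)
    {x y : α} (hxy : ∀ k < t, g ^ k • x ≠ y) (z : α) :
    (∃ k < t, g ^ k • x = z) ∨ ∃ k < t, g ^ k • y = z := by
  classical
  let orbitSegment (w : α) : Finset α := (Finset.range t).image (g ^ · • w)
  have hcard_orbit (w : α) : (orbitSegment w).card = t := by
    rw [Finset.card_image_of_injOn, Finset.card_range]
    simpa [hper w] using pow_smul_injOn_Iio_period (g := g) w
  have hdisj : Disjoint (orbitSegment x) (orbitSegment y) := by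
    simp only [orbitSegment, Finset.disjoint_left, Finset.mem_image, Finset.mem_range]
    rintro _ ⟨i, -, rfl⟩ ⟨j, -, hj⟩
    obtain ⟨k, hk, hkxy⟩ := exists_pow_smul_eq_of_pow_smul_eq hper ht hj.symm
    exact hxy k hk hkxy
  by_contra! hz
  have hz' : z ∉ orbitSegment x ∪ orbitSegment y := by
    simpa [orbitSegment] using hz
  have := Finset.card_lt_univ_of_notMem hz'
  rw [Finset.card_union_of_disjoint hdisj, hcard_orbit, hcard_orbit, hcard] at this
  omega

end PeriodicOrbits

section Sequences

variable {F : Type*} [Field F] [DecidableEq F] {a : F} {t : ℕ}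

lemma period_companionGL (hQ : ∀ x : F, x ^ 2 - a * x + 1 ≠ 0)
    (hα : ∀ n, alph a n = 0 ↔ t ∣ n) (z : OnePoint F) : period (companionGL a) z = t :=
  Nat.dvd_right_iff_eq.mp fun n ↦ by
    rw [← pow_smul_eq_iff_period_dvd, companionGL_pow_smul_eq_self_iff a hQ, hα]

variable (hper : ∀ z : OnePoint F, period (companionGL a) z = t)
include hper

lemma companionGL_pow_smul_infty_eq_aSeq {k : ℕ} (hk₀ : 1 ≤ k) (hk : k < t) :
    companionGL a ^ k • (∞ : OnePoint F) = aSeq a k := by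
  obtain ⟨n, rfl⟩ : ∃ n, k = n + 1 := ⟨k - 1, by omega⟩
  have ha₁ : ((aSeq a 1 : F) : OnePoint F) = companionGL a • ∞ := by
    simp [aSeq, companionGL_smul_infty]
  rw [pow_succ, mul_smul, ← ha₁]
  refine companionGL_pow_smul_coe_eq a (s := fun n ↦ aSeq a (n + 1)) (fun _ ↦ rfl) fun m hm h ↦ ?_
  rw [ha₁, ← mul_smul, ← pow_succ, pow_smul_eq_iff_period_dvd, hper] at h
  exact Nat.succ_ne_zero m (Nat.eq_zero_of_dvd_of_lt h (by omega))

lemma aSeq_injOn : Set.InjOn (aSeq a) (Set.Ico 1 t) := fun i ⟨hi₀, hi⟩ j ⟨hj₀, hj⟩ h ↦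
  pow_smul_injOn_Iio_period (g := companionGL a) ∞ (by rwa [Set.mem_Iio, hper])
    (by rwa [Set.mem_Iio, hper]) <| by
      simp only [companionGL_pow_smul_infty_eq_aSeq hper hi₀ hi,
        companionGL_pow_smul_infty_eq_aSeq hper hj₀ hj, h]

variable {b : F} (hb : ∀ k, 1 ≤ k → k < t → b ≠ aSeq a k)
include hb

lemma companionGL_pow_smul_infty_ne_coe {k : ℕ} (hk : k < t) :
    companionGL a ^ k • (∞ : OnePoint F) ≠ b := by
  rcases Nat.eq_zero_or_pos k with rfl | hk₀
  · simp
  · rw [companionGL_pow_smul_infty_eq_aSeq hper hk₀ hk, Ne, OnePoint.coe_eq_coe]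
    exact (hb k hk₀ hk).symm

lemma companionGL_pow_smul_coe_eq_bSeq {l : ℕ} (hl : l < t) :
    companionGL a ^ l • (b : OnePoint F) = bSeq a b l := by
  refine companionGL_pow_smul_coe_eq a (s := bSeq a b) (fun _ ↦ rfl) fun m _ h ↦ ?_
  have h' : companionGL a ^ 0 • (∞ : OnePoint F) = companionGL a ^ m • (b : OnePoint F) := by
    rw [pow_zero, one_smul]
    exact h.symm
  obtain ⟨k, hk, hkb⟩ := exists_pow_smul_eq_of_pow_smul_eq hper (by omega) h'
  exact companionGL_pow_smul_infty_ne_coe hper hb hk hkb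

lemma bSeq_injOn : Set.InjOn (bSeq a b) (Set.Iio t) := fun i hi j hj h ↦
  pow_smul_injOn_Iio_period (g := companionGL a) (b : OnePoint F) (by rwa [Set.mem_Iio, hper])
    (by rwa [Set.mem_Iio, hper]) <| by
      simp only [companionGL_pow_smul_coe_eq_bSeq hper hb hi,
        companionGL_pow_smul_coe_eq_bSeq hper hb hj, h]

lemma aSeq_ne_bSeq {i j : ℕ} (hi₀ : 1 ≤ i) (hi : i < t) (hj : j < t) :
    aSeq a i ≠ bSeq a b j := by
  intro h
  rw [← OnePoint.coe_eq_coe, ← companionGL_pow_smul_infty_eq_aSeq hper hi₀ hi,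
    ← companionGL_pow_smul_coe_eq_bSeq hper hb hj] at h
  obtain ⟨k, hk, hkb⟩ := exists_pow_smul_eq_of_pow_smul_eq hper (by omega) h
  exact companionGL_pow_smul_infty_ne_coe hper hb hk hkb

lemma exists_aSeq_eq_or_exists_bSeq_eq [Fintype F] (hcard : Fintype.card F + 1 = 2 * t)
    (c : F) : (∃ k, 1 ≤ k ∧ k < t ∧ aSeq a k = c) ∨ ∃ l < t, bSeq a b l = c := by
  rcases exists_pow_smul_eq_or_exists_pow_smul_eq hper (by omega)
      (Fintype.card_option.trans hcard) (fun _ ↦ companionGL_pow_smul_infty_ne_coe hper hb) c with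
    ⟨k, hk, hkc⟩ | ⟨l, hl, hlc⟩
  · have hk₀ : 1 ≤ k := Nat.pos_of_ne_zero (by rintro rfl; simp at hkc)
    rw [companionGL_pow_smul_infty_eq_aSeq hper hk₀ hk, OnePoint.coe_eq_coe] at hkc
    exact .inl ⟨k, hk₀, hk, hkc⟩
  · rw [companionGL_pow_smul_coe_eq_bSeq hper hb hl, OnePoint.coe_eq_coe] at hlc
    exact .inr ⟨l, hl, hlc⟩

end Sequences

theorem stmt6 (F : Type*) [Field F] [Fintype F] (q : ℕ) (hq : Fintype.card F = q)
    (a : F) (hirr : Irreducible (X ^ 2 + C a * X + 1 : F[X]))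
    (ω : AlgebraicClosure F) (hroot : aeval ω (X ^ 2 + C a * X + 1 : F[X]) = 0)
    (hord : orderOf ω = q + 1)
    (hqodd : Odd q) (t : ℕ) (ht : t = (q + 1) / Nat.gcd 2 (q + 1)) (b : F)
    (hb : ∀ k : ℕ, 1 ≤ k → k ≤ t - 1 → b ≠ aSeq a k) :
    (∀ i j : ℕ, 1 ≤ i → i ≤ t - 1 → 1 ≤ j → j ≤ t - 1 → aSeq a i = aSeq a j → i = j) ∧
    (∀ i j : ℕ, i ≤ t - 1 → j ≤ t - 1 → bSeq a b i = bSeq a b j → i = j) ∧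
    (∀ i j : ℕ, 1 ≤ i → i ≤ t - 1 → j ≤ t - 1 → aSeq a i ≠ bSeq a b j) ∧
    ∀ c : F, (∃ k : ℕ, 1 ≤ k ∧ k ≤ t - 1 ∧ aSeq a k = c) ∨
      (∃ l : ℕ, l ≤ t - 1 ∧ bSeq a b l = c) := by
  classical
  have h2t : q + 1 = 2 * t := by
    obtain ⟨m, rfl⟩ := hqodd
    rw [ht, Nat.gcd_eq_left ⟨m + 1, by ring⟩]
    omega
  have h1t : 1 < t := by
    have := hq ▸ Fintype.one_lt_card (α := F)
    omega
  have hper : ∀ z : OnePoint F, period (companionGL a) z = t :=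
    period_companionGL (sq_sub_mul_add_one_ne_zero a hirr)
      (alph_eq_zero_iff_dvd a hroot h1t (hord.trans h2t))
  have hb' : ∀ k, 1 ≤ k → k < t → b ≠ aSeq a k := fun k hk₀ hk ↦ hb k hk₀ (by omega)
  refine ⟨fun i j hi₀ hi hj₀ hj ↦ aSeq_injOn hper ⟨hi₀, by omega⟩ ⟨hj₀, by omega⟩,
    fun i j hi hj ↦ bSeq_injOn hper hb' (show i < t by omega) (show j < t by omega),
    fun i j hi₀ hi hj ↦ aSeq_ne_bSeq hper hb' hi₀ (by omega) (by omega), fun c ↦ ?_⟩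
  rcases exists_aSeq_eq_or_exists_bSeq_eq hper hb' (hq ▸ h2t) c with
    ⟨k, hk₀, hk, hkc⟩ | ⟨l, hl, hlc⟩
  exacts [.inl ⟨k, hk₀, by omega, hkc⟩, .inr ⟨l, by omega, hlc⟩]
end
end

section
/- Let 1 ≤ k ≤ t−2, and suppose that in PSL₂(F) one has (u(a)·s)^k = u(c)·s·u(x)·h(y) and (u(a)·s)^{k+1} = u(c')·s·u(x')·h(y') for some c, c', x, x' ∈ F and y, y' ∈ F\{0}, with c ≠ 0. Then c' = a − c⁻¹. Likewise, if q is odd, b ∈ F, and (u(a)·s)^ℓ·(u(b)·s·u(−b)) = u(d)·s·u(x)·h(y) and (u(a)·s)^{ℓ+1}·(u(b)·s·u(−b)) = u(d')·s·u(x')·h(y') with d ≠ 0, then d' = a − d⁻¹. -/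
open Polynomial

noncomputable section

/-
The element `u(c) s u(x) h(y)` sends `∞ ∈ ℙ¹(F)` to `c`, and `u(a) s` acts on `ℙ¹(F)` as the
Möbius map `z ↦ a - 1/z`. Applying `u(a) s` to an element sending `∞` to `c ≠ 0` therefore gives
one sending `∞` to `a - c⁻¹`.
-/

namespace PSL2

variable {F : Type*} [Field F]

/- `colRatio g` is the image of `∞` under the Möbius action of `g`; it is well defined on
`PSL₂` because the centre of `SL₂` consists of scalar matrices. -/
def colRatio : PSL2 F → F :=
  Quotient.lift (fun G : SL2 F => G 0 0 / G 1 0) fun G H hGH => by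
    obtain ⟨r, hr, hHG⟩ := Matrix.SpecialLinearGroup.mem_center_iff.mp
      ((QuotientGroup.leftRel_apply).mp hGH)
    have hr0 : r ≠ 0 := by rintro rfl; simp at hr
    have hH : (H : Matrix (Fin 2) (Fin 2) F) = G * Matrix.scalar (Fin 2) r := by
      rw [hHG, ← Matrix.SpecialLinearGroup.coe_mul, mul_inv_cancel_left]
    simp only [hH, Matrix.scalar_apply, Matrix.mul_diagonal]
    exact (mul_div_mul_right _ _ hr0).symm

theorem colRatio_mk (G : SL2 F) : colRatio (G : PSL2 F) = G 0 0 / G 1 0 := rfl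

def uuSL (x : F) : SL2 F := ⟨!![1, x; 0, 1], by simp [Matrix.det_fin_two_of]⟩

def ssSL : SL2 F := ⟨!![0, 1; -1, 0], by simp [Matrix.det_fin_two_of]⟩

def hhSL (y : F) (hy : y ≠ 0) : SL2 F :=
  ⟨!![y, 0; 0, y⁻¹], by simp [Matrix.det_fin_two_of, mul_inv_cancel₀ hy]⟩

theorem colRatio_uu_mul_ss_mul_uu_mul_hh (c x y : F) (hy : y ≠ 0) :
    colRatio (uu c * ss * uu x * hh y hy) = c := by
  change colRatio ((uuSL c : PSL2 F) * ((ssSL : SL2 F) : PSL2 F) * (uuSL x : PSL2 F) *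
    (hhSL y hy : PSL2 F)) = c
  rw [← QuotientGroup.mk_mul, ← QuotientGroup.mk_mul, ← QuotientGroup.mk_mul, colRatio_mk]
  simp only [Matrix.SpecialLinearGroup.coe_mul]
  simp [uuSL, ssSL, hhSL]
  field_simp

theorem colRatio_uu_mul_ss_mul (a : F) {g : PSL2 F} (hg : colRatio g ≠ 0) :
    colRatio (uu a * ss * g) = a - (colRatio g)⁻¹ := by
  induction g using QuotientGroup.induction_on with
  | H G =>
    rw [colRatio_mk] at hg
    have hG : G 0 0 ≠ 0 := (div_ne_zero_iff.mp hg).1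
    change colRatio ((uuSL a : PSL2 F) * ((ssSL : SL2 F) : PSL2 F) * (G : PSL2 F)) = _
    rw [← QuotientGroup.mk_mul, ← QuotientGroup.mk_mul, colRatio_mk, colRatio_mk, inv_div]
    simp only [Matrix.SpecialLinearGroup.coe_mul]
    simp [uuSL, ssSL, Matrix.mul_apply, Fin.sum_univ_two]
    field_simp
    ring

theorem eq_sub_inv_of_uu_mul_ss_mul {a c c' x x' y y' : F} {hy : y ≠ 0} {hy' : y' ≠ 0}
    {g : PSL2 F} (hc : c ≠ 0) (hg : g = uu c * ss * uu x * hh y hy)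
    (hg' : uu a * ss * g = uu c' * ss * uu x' * hh y' hy') : c' = a - c⁻¹ := by
  have hcg : colRatio g = c := hg ▸ colRatio_uu_mul_ss_mul_uu_mul_hh c x y hy
  rw [← colRatio_uu_mul_ss_mul_uu_mul_hh c' x' y' hy', ← hg', colRatio_uu_mul_ss_mul a
    (hcg ▸ hc), hcg]

end PSL2

theorem stmt8_general (F : Type*) [Field F] (q : ℕ) (a : F) (t : ℕ) :
    (∀ (k : ℕ) (c c' x x' y y' : F) (hy : y ≠ 0) (hy' : y' ≠ 0),
      1 ≤ k → k ≤ t - 2 → c ≠ 0 →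
      (uu a * ss : PSL2 F) ^ k = uu c * ss * uu x * hh y hy →
      (uu a * ss : PSL2 F) ^ (k + 1) = uu c' * ss * uu x' * hh y' hy' →
      c' = a - c⁻¹) ∧
    (Odd q → ∀ (b : F) (l : ℕ) (d d' x x' y y' : F) (hy : y ≠ 0) (hy' : y' ≠ 0),
      d ≠ 0 →
      (uu a * ss : PSL2 F) ^ l * (uu b * ss * uu (-b)) = uu d * ss * uu x * hh y hy →
      (uu a * ss : PSL2 F) ^ (l + 1) * (uu b * ss * uu (-b)) = uu d' * ss * uu x' * hh y' hy' →
      d' = a - d⁻¹) := by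
  refine ⟨fun k c c' x x' y y' hy hy' _ _ hc h1 h2 => ?_,
    fun _ b l d d' x x' y y' hy hy' hd h1 h2 => ?_⟩
  · exact PSL2.eq_sub_inv_of_uu_mul_ss_mul hc h1 (by rwa [← pow_succ'])
  · exact PSL2.eq_sub_inv_of_uu_mul_ss_mul hd h1 (by rwa [← mul_assoc, ← pow_succ'])

theorem stmt8 (F : Type*) [Field F] [Fintype F] (q : ℕ) (hq : Fintype.card F = q)
    (a : F) (hirr : Irreducible (X ^ 2 + C a * X + 1 : F[X]))
    (ω : AlgebraicClosure F) (hroot : aeval ω (X ^ 2 + C a * X + 1 : F[X]) = 0)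
    (hord : orderOf ω = q + 1) (t : ℕ) (ht : t = (q + 1) / Nat.gcd 2 (q + 1)) :
    (∀ (k : ℕ) (c c' x x' y y' : F) (hy : y ≠ 0) (hy' : y' ≠ 0),
      1 ≤ k → k ≤ t - 2 → c ≠ 0 →
      (uu a * ss : PSL2 F) ^ k = uu c * ss * uu x * hh y hy →
      (uu a * ss : PSL2 F) ^ (k + 1) = uu c' * ss * uu x' * hh y' hy' →
      c' = a - c⁻¹) ∧
    (Odd q → ∀ (b : F) (l : ℕ) (d d' x x' y y' : F) (hy : y ≠ 0) (hy' : y' ≠ 0),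
      d ≠ 0 →
      (uu a * ss : PSL2 F) ^ l * (uu b * ss * uu (-b)) = uu d * ss * uu x * hh y hy →
      (uu a * ss : PSL2 F) ^ (l + 1) * (uu b * ss * uu (-b)) = uu d' * ss * uu x' * hh y' hy' →
      d' = a - d⁻¹) :=
  stmt8_general F q a t

end
end

section
/- The following hold for the sequence (a_k): (1) if F has characteristic 2, then a_{q/2} = 1; (2) if F has odd characteristic and 4 divides q−1, then a_{(q−1)/4} = 1 or a_{(q−1)/4} = −1; (3) if F has odd characteristic and 4 divides q+1, then a_{(q+1)/4} = a/2. -/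
open Polynomial

noncomputable section

/-!
Put `ζ = -ω` and `ξ = -ω⁻¹`, so that `ζ + ξ = a` and `ζ * ξ = 1`. Then the Binet formula
`alph a n * (ζ - ξ) = ζ ^ n - ξ ^ n` holds, hence `alph a n ≠ 0` for `0 < 2 * n < q + 1`
because `ω` has order `q + 1`, and therefore `aSeq a k = alph a (k + 1) / alph a k` in the
relevant range. In each of the three cases the primitive root `ω` makes `ζ ^ (2 * k + 1) = 1`,
which forces `alph a (k + 1) = -alph a k`, i.e. `aSeq a k = -1` (equal to `1` in characteristic
`2`), or `ζ ^ (2 * k) = -1`, which forces `2 * alph a (k + 1) = a * alph a k`.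
-/

theorem IsPrimitiveRoot.pow_div_two_eq_neg_one {R : Type*} [CommRing R] [IsDomain R] {ω : R}
    {n : ℕ} (h : IsPrimitiveRoot ω n) (hn : Even n) (hn0 : n ≠ 0) : ω ^ (n / 2) = -1 := by
  obtain ⟨m, rfl⟩ := hn
  have hm : m ≠ 0 := by omega
  have h2 : IsPrimitiveRoot (ω ^ m) ((m + m) / m) := h.pow_of_dvd hm (Dvd.intro_left 2 (two_mul m))
  rw [← two_mul, Nat.mul_div_cancel _ (Nat.pos_of_ne_zero hm)] at h2
  rw [← two_mul, Nat.mul_div_cancel_left _ two_pos]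
  exact h2.eq_neg_one_of_two_right

theorem neg_add_neg_inv_eq_of_aeval_eq_zero {F K : Type*} [Field F] [Field K] [Algebra F K]
    {a : F} {ω : K} (h : aeval ω (X ^ 2 + C a * X + 1 : F[X]) = 0) :
    -ω + -ω⁻¹ = algebraMap F K a := by
  have h' : ω ^ 2 + algebraMap F K a * ω + 1 = 0 := by simpa using h
  have hω : ω ≠ 0 := by
    rintro rfl
    simp at h'
  field_simp
  linear_combination -h'

theorem aSeq_eq_alph_div {F : Type*} [Field F] (a : F) :
    ∀ k, (∀ j, 0 < j → j ≤ k → alph a j ≠ 0) → aSeq a k = alph a (k + 1) / alph a k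
  | 0, _ => by simp [aSeq, alph]
  | k + 1, h => by
    have hne : alph a (k + 1) ≠ 0 := h (k + 1) k.succ_pos le_rfl
    rw [aSeq, aSeq_eq_alph_div a k (fun j hj hjk => h j hj (by omega)), inv_div, alph,
      eq_div_iff hne, sub_mul, div_mul_cancel₀ _ hne]

section Binet

variable {F K : Type*} [Field F] [CommRing K] [Algebra F K] {a : F} {ζ ξ : K}

theorem algebraMap_alph_mul_sub (hsum : ζ + ξ = algebraMap F K a) (hprod : ζ * ξ = 1) :
    ∀ n : ℕ, algebraMap F K (alph a n) * (ζ - ξ) = ζ ^ n - ξ ^ n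
  | 0 => by simp [alph]
  | 1 => by simp [alph]
  | n + 2 => by
    have h₀ := algebraMap_alph_mul_sub hsum hprod n
    have h₁ := algebraMap_alph_mul_sub hsum hprod (n + 1)
    rw [alph, map_sub, map_mul, ← hsum]
    linear_combination (ζ + ξ) * h₁ - h₀ + (ζ ^ n - ξ ^ n) * hprod

theorem ne_of_mul_eq_one_of_sq_ne_one (hprod : ζ * ξ = 1) (h : ζ ^ 2 ≠ 1) : ζ ≠ ξ := by
  rintro rfl
  exact h (by rw [sq, hprod])

theorem alph_ne_zero (hsum : ζ + ξ = algebraMap F K a) (hprod : ζ * ξ = 1) {n : ℕ}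
    (h : ζ ^ (2 * n) ≠ 1) : alph a n ≠ 0 := by
  intro h0
  have hbinet := algebraMap_alph_mul_sub hsum hprod n
  have hn : (ζ * ξ) ^ n = 1 := by rw [hprod, one_pow]
  rw [h0, map_zero, zero_mul] at hbinet
  exact h (by linear_combination (-ζ ^ n) * hbinet + hn)

variable [IsDomain K]

theorem alph_succ_eq_neg (hsum : ζ + ξ = algebraMap F K a) (hprod : ζ * ξ = 1) (hne : ζ ≠ ξ)
    {k : ℕ} (hpow : ζ ^ (2 * k + 1) = 1) : alph a (k + 1) = -alph a k := by
  apply (algebraMap F K).injective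
  apply mul_right_cancel₀ (sub_ne_zero.mpr hne)
  have hk : (ζ * ξ) ^ k = 1 := by rw [hprod, one_pow]
  rw [map_neg, neg_mul, algebraMap_alph_mul_sub hsum hprod, algebraMap_alph_mul_sub hsum hprod]
  linear_combination (ξ ^ k + ξ ^ (k + 1)) * hpow - (ζ ^ (k + 1) + ζ ^ (k + 1) * ξ) * hk
    - ζ ^ k * hprod

theorem two_mul_alph_succ (hsum : ζ + ξ = algebraMap F K a) (hprod : ζ * ξ = 1) (hne : ζ ≠ ξ)
    {k : ℕ} (hpow : ζ ^ (2 * k) = -1) : 2 * alph a (k + 1) = a * alph a k := by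
  apply (algebraMap F K).injective
  apply mul_right_cancel₀ (sub_ne_zero.mpr hne)
  have hk : (ζ * ξ) ^ k = 1 := by rw [hprod, one_pow]
  rw [map_mul, map_mul, map_ofNat, mul_assoc, mul_assoc, algebraMap_alph_mul_sub hsum hprod,
    algebraMap_alph_mul_sub hsum hprod, ← hsum]
  linear_combination (ζ - ξ) * (ξ ^ k * hpow - ζ ^ k * hk)

end Binet

section Sequence

variable {F K : Type*} [Field F] [CommRing K] [IsDomain K] [Algebra F K] {a : F} {ζ ξ : K}
  {k : ℕ}

theorem aSeq_eq_neg_one (hsum : ζ + ξ = algebraMap F K a) (hprod : ζ * ξ = 1) (hk : 0 < k)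
    (hζ : ∀ j, 0 < j → j ≤ k → ζ ^ (2 * j) ≠ 1) (hpow : ζ ^ (2 * k + 1) = 1) :
    aSeq a k = -1 := by
  have hne : ζ ≠ ξ := ne_of_mul_eq_one_of_sq_ne_one hprod (by simpa using hζ 1 one_pos hk)
  have halph j hj hjk : alph a j ≠ 0 := alph_ne_zero hsum hprod (hζ j hj hjk)
  rw [aSeq_eq_alph_div a k halph, alph_succ_eq_neg hsum hprod hne hpow, neg_div,
    div_self (halph k hk le_rfl)]

theorem aSeq_eq_div_two (hsum : ζ + ξ = algebraMap F K a) (hprod : ζ * ξ = 1) (h2 : (2 : F) ≠ 0)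
    (hk : 0 < k) (hζ : ∀ j, 0 < j → j ≤ k → ζ ^ (2 * j) ≠ 1) (hpow : ζ ^ (2 * k) = -1) :
    aSeq a k = a / 2 := by
  have hne : ζ ≠ ξ := ne_of_mul_eq_one_of_sq_ne_one hprod (by simpa using hζ 1 one_pos hk)
  have halph j hj hjk : alph a j ≠ 0 := alph_ne_zero hsum hprod (hζ j hj hjk)
  rw [aSeq_eq_alph_div a k halph, div_eq_div_iff (halph k hk le_rfl) h2, mul_comm,
    two_mul_alph_succ hsum hprod hne hpow]

end Sequence

theorem stmt12_general (F : Type*) [Field F] [Fintype F] (q : ℕ) (hq : Fintype.card F = q)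
    (a : F) (ω : AlgebraicClosure F) (hroot : aeval ω (X ^ 2 + C a * X + 1 : F[X]) = 0)
    (hord : orderOf ω = q + 1) :
    (ringChar F = 2 → aSeq a (q / 2) = 1) ∧
    (ringChar F ≠ 2 → 4 ∣ q - 1 →
      aSeq a ((q - 1) / 4) = 1 ∨ aSeq a ((q - 1) / 4) = -1) ∧
    (ringChar F ≠ 2 → 4 ∣ q + 1 → aSeq a ((q + 1) / 4) = a / 2) := by
  have hq2 : 2 ≤ q := hq ▸ Fintype.one_lt_card
  have hω : IsPrimitiveRoot ω (q + 1) := hord ▸ IsPrimitiveRoot.orderOf ω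
  have hsum := neg_add_neg_inv_eq_of_aeval_eq_zero hroot
  have hprod : -ω * -ω⁻¹ = 1 := by rw [neg_mul_neg, mul_inv_cancel₀ (hω.ne_zero (by omega))]
  have hζ {k : ℕ} (hk : 2 * k < q + 1) j (hj : 0 < j) (hjk : j ≤ k) : (-ω) ^ (2 * j) ≠ 1 := by
    rw [pow_mul, neg_sq, ← pow_mul]
    exact hω.pow_ne_one_of_pos_of_lt (by omega) (by omega)
  have hhalf (heven : Even (q + 1)) : ω ^ ((q + 1) / 2) = -1 :=
    hω.pow_div_two_eq_neg_one heven (by omega)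
  refine ⟨fun hchar => ?_, fun _ hdvd => Or.inr ?_, fun hchar hdvd => ?_⟩
  · have hq_even : q % 2 = 0 := hq ▸ FiniteField.even_card_of_char_two hchar
    have hneg : (-1 : F) = 1 := neg_one_eq_one_iff.mpr hchar
    rw [← hneg]
    refine aSeq_eq_neg_one hsum hprod (by omega) (hζ (by omega)) ?_
    rw [show 2 * (q / 2) + 1 = q + 1 by omega, neg_pow, hω.pow_eq_one, mul_one,
      (Nat.odd_iff.mpr (by omega)).neg_one_pow]
    simpa using congrArg (algebraMap F (AlgebraicClosure F)) hneg
  · refine aSeq_eq_neg_one hsum hprod (by omega) (hζ (by omega)) ?_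
    rw [show 2 * ((q - 1) / 4) + 1 = (q + 1) / 2 by omega, neg_pow,
      hhalf (Nat.even_iff.mpr (by omega)), (Nat.odd_iff.mpr (by omega)).neg_one_pow, neg_one_mul,
      neg_neg]
  · refine aSeq_eq_div_two hsum hprod (Ring.two_ne_zero hchar) (by omega) (hζ (by omega)) ?_
    rw [show 2 * ((q + 1) / 4) = (q + 1) / 2 by omega, neg_pow,
      hhalf (Nat.even_iff.mpr (by omega)), (Nat.even_iff.mpr (by omega)).neg_one_pow, one_mul]

theorem stmt12 (F : Type*) [Field F] [Fintype F] (q : ℕ) (hq : Fintype.card F = q)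
    (a : F) (hirr : Irreducible (X ^ 2 + C a * X + 1 : F[X]))
    (ω : AlgebraicClosure F) (hroot : aeval ω (X ^ 2 + C a * X + 1 : F[X]) = 0)
    (hord : orderOf ω = q + 1) (t : ℕ) (ht : t = (q + 1) / Nat.gcd 2 (q + 1)) :
    (ringChar F = 2 → aSeq a (q / 2) = 1) ∧
    (ringChar F ≠ 2 → 4 ∣ q - 1 →
      aSeq a ((q - 1) / 4) = 1 ∨ aSeq a ((q - 1) / 4) = -1) ∧
    (ringChar F ≠ 2 → 4 ∣ q + 1 → aSeq a ((q + 1) / 4) = a / 2) :=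
  stmt12_general F q hq a ω hroot hord

end
end

section
/- Suppose q is odd. Then 1 ≠ a_k for all 1 ≤ k ≤ t−1, or −1 ≠ a_k for all 1 ≤ k ≤ t−1; that is, it is possible to choose b = 1 or b = −1 as an element satisfying b ≠ a_k for all 1 ≤ k ≤ t−1. -/
open Polynomial

noncomputable section

/-! With `ω + ω⁻¹ = -a`, the recurrence for `α` gives the Chebyshev-type closed form
`α_{n-1} · (ω - ω⁻¹) = ± (ωⁿ - ω⁻ⁿ)`, so `α_{n-1} ≠ 0` as long as `ω^{2n} ≠ 1`, i.e. for `n < t`.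
As long as the `α` do not vanish, `a_k = α_k / α_{k-1}`, so `a_k = 1` would force
`α_k = α_{k-1}`, and by the closed form `ω^{2k+1} = 1`: impossible, since the order `q + 1`
of `ω` is even. -/

lemma map_aSeq {F E : Type*} [Field F] [Field E] (φ : F →+* E) (a : F) (k : ℕ) :
    φ (aSeq a k) = aSeq (φ a) k := by
  induction k with
  | zero => simp [aSeq]
  | succ k ih => simp [aSeq, ih]

lemma aSeq_eq_alph_div_alph {E : Type*} [Field E] (A : E) (k : ℕ)
    (h : ∀ j, 0 < j → j ≤ k → alph A j ≠ 0) : aSeq A k = alph A (k + 1) / alph A k := by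
  induction k with
  | zero => simp [aSeq, alph]
  | succ k ih =>
    have hk : alph A (k + 1) ≠ 0 := h (k + 1) k.succ_pos le_rfl
    rw [aSeq, ih fun j hj hjk => h j hj (hjk.trans k.le_succ), inv_div,
      show alph A (k + 1 + 1) = A * alph A (k + 1) - alph A k from rfl]
    field_simp

section Root

variable {E : Type*} [Field E] {A ω : E}

lemma alph_mul_pow_mul_sq_sub_one (hω : ω ^ 2 + A * ω + 1 = 0) (n : ℕ) :
    alph A n * ω ^ n * (ω ^ 2 - 1) = (-1) ^ (n + 1) * (ω ^ (2 * n) - 1) * ω := by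
  induction n using Nat.twoStepInduction with
  | zero => simp [alph]
  | one => simp [alph]; ring
  | more n ih1 ih2 =>
    rw [show alph A (n + 2) = A * alph A (n + 1) - alph A n from rfl]
    linear_combination (A * ω) * ih2 - ω ^ 2 * ih1
      + ((-1) ^ (n + 2) * (ω ^ (2 * n + 2) - 1) * ω) * hω

lemma ne_zero_of_sq_add_mul_add_one_eq_zero (hω : ω ^ 2 + A * ω + 1 = 0) : ω ≠ 0 := by
  rintro rfl
  simp at hω

lemma alph_ne_zero_s15 (hω : ω ^ 2 + A * ω + 1 = 0) {n : ℕ} (hn : 0 < n)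
    (hlt : 2 * n < orderOf ω) : alph A n ≠ 0 := by
  intro h0
  have h := alph_mul_pow_mul_sq_sub_one hω n
  have hpow : ω ^ (2 * n) = 1 := by
    rw [h0] at h
    simpa [ne_zero_of_sq_add_mul_add_one_eq_zero hω, sub_eq_zero] using h.symm
  exact absurd (orderOf_le_of_pow_eq_one (by omega) hpow) (not_le.mpr hlt)

lemma pow_two_mul_add_one_eq_one_of_alph_succ_eq (hω : ω ^ 2 + A * ω + 1 = 0)
    (hω1 : ω ≠ -1) {n : ℕ} (h : alph A (n + 1) = alph A n) : ω ^ (2 * n + 1) = 1 := by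
  have hsucc := alph_mul_pow_mul_sq_sub_one hω (n + 1)
  rw [h] at hsucc
  have hprod : (-1) ^ (n + 1) * ω * (ω + 1) * (ω ^ (2 * n + 1) - 1) = 0 := by
    linear_combination hsucc - ω * alph_mul_pow_mul_sq_sub_one hω n
  have hω1' : ω + 1 ≠ 0 := fun h' => hω1 (eq_neg_of_add_eq_zero_left h')
  simpa [ne_zero_of_sq_add_mul_add_one_eq_zero hω, hω1', sub_eq_zero] using hprod

theorem aSeq_ne_one (hω : ω ^ 2 + A * ω + 1 = 0) (heven : Even (orderOf ω)) {k : ℕ}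
    (hk : 2 * k < orderOf ω) : aSeq A k ≠ 1 := by
  cases k with
  | zero => simp [aSeq]
  | succ k =>
    have hω1 : ω ≠ -1 := by
      rintro rfl
      have := orderOf_le_of_pow_eq_one two_pos (neg_one_sq : (-1 : E) ^ 2 = 1)
      omega
    intro h1
    rw [aSeq_eq_alph_div_alph A _ fun j hj hjk => alph_ne_zero_s15 hω hj (by omega)] at h1
    have hpow := pow_two_mul_add_one_eq_one_of_alph_succ_eq hω hω1 (eq_of_div_eq_one h1)
    have hdvd := heven.two_dvd.trans (orderOf_dvd_of_pow_eq_one hpow)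
    omega

end Root

theorem stmt15_general (F : Type*) [Field F] (q : ℕ)
    (a : F)
    (ω : AlgebraicClosure F) (hroot : aeval ω (X ^ 2 + C a * X + 1 : F[X]) = 0)
    (hord : orderOf ω = q + 1)
    (hqodd : Odd q) (t : ℕ) (ht : t = (q + 1) / Nat.gcd 2 (q + 1)) :
    (∀ k : ℕ, 1 ≤ k → k ≤ t - 1 → (1 : F) ≠ aSeq a k) ∨
    (∀ k : ℕ, 1 ≤ k → k ≤ t - 1 → (-1 : F) ≠ aSeq a k) := by
  left
  intro k _ hkt h1
  have hω : ω ^ 2 + algebraMap F _ a * ω + 1 = 0 := by simpa using hroot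
  have heven : Even (q + 1) := hqodd.add_one
  have h2t : 2 * t = q + 1 := by
    rw [ht, Nat.gcd_eq_left (even_iff_two_dvd.mp heven)]
    exact Nat.mul_div_cancel' (even_iff_two_dvd.mp heven)
  refine aSeq_ne_one hω (hord ▸ heven) (k := k) (by omega) ?_
  rw [← map_aSeq, ← h1, map_one]

theorem stmt15 (F : Type*) [Field F] [Fintype F] (q : ℕ) (hq : Fintype.card F = q)
    (a : F) (hirr : Irreducible (X ^ 2 + C a * X + 1 : F[X]))
    (ω : AlgebraicClosure F) (hroot : aeval ω (X ^ 2 + C a * X + 1 : F[X]) = 0)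
    (hord : orderOf ω = q + 1)
    (hqodd : Odd q) (t : ℕ) (ht : t = (q + 1) / Nat.gcd 2 (q + 1)) :
    (∀ k : ℕ, 1 ≤ k → k ≤ t - 1 → (1 : F) ≠ aSeq a k) ∨
    (∀ k : ℕ, 1 ≤ k → k ≤ t - 1 → (-1 : F) ≠ aSeq a k) :=
  stmt15_general F q a ω hroot hord hqodd t ht

end
end
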